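/- arXiv:2001.01175 — 2 statements merged into one kernel-verified Lean document; each statement's English description precedes it below -/
import Mathlib

section
/- For all t ≥ 0 and positive integers k, the variance of the volume of type-≥k sites satisfies Var(Y_k(t)) ≤ γ_d (2αt)^d E[Y_k(t)]. -/
open MeasureTheory ProbabilityTheory Real Set Filter

noncomputable section

/-- volume of the unit ball in `ℝ^d`. -/
def unitBallVol (d : ℕ) : ℝ := (volume (Metric.ball (0 : EuclideanSpace ℝ (Fin d)) 1)).toReal

/-- coordinatewise torus distance on the torus `[0,L]^d`. -/
def torusDist (d : ℕ) (L : ℝ) (x y : Fin d → ℝ) : ℝ :=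
  Real.sqrt (∑ i, (min |x i - y i| (L - |x i - y i|)) ^ 2)

/-- the torus, viewed as a box of side length `L`. -/
def box (d : ℕ) (L : ℝ) : Set (Fin d → ℝ) := Set.univ.pi fun _ => Set.Ico 0 L

/-!
The variance of `Y = vol(ψ)` is `∫∫ (P[x, y ∈ ψ] - P[x ∈ ψ] P[y ∈ ψ]) dx dy` by Fubini. The
integrand vanishes when `x` and `y` are more than `2αt` apart and is at most `P[x ∈ ψ]`
otherwise, so the variance is at most `E[Y]` times the volume of a torus ball of radius `2αt`.
That volume is at most the Euclidean one, because the torus ball is covered by the translates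
of a Euclidean ball by `L k`, `k ∈ {-1, 0, 1}^d`, cut down to the box, and the box's translates
by `L ℤ^d` are disjoint.
-/

open scoped ENNReal

lemma volume_setOf_sum_sq_sub_le {ι : Type*} [Fintype ι] (x : ι → ℝ) {r : ℝ} (hr : 0 ≤ r) :
    volume {z : ι → ℝ | ∑ i, (z i - x i) ^ 2 ≤ r ^ 2}
      = ENNReal.ofReal (r ^ Fintype.card ι) * volume (Metric.ball (0 : EuclideanSpace ℝ ι) 1) := by
  have hpre : (MeasurableEquiv.toLp 2 (ι → ℝ)).symm ⁻¹' {z | ∑ i, (z i - x i) ^ 2 ≤ r ^ 2}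
      = Metric.closedBall (WithLp.toLp 2 x) r := by
    ext z
    simp only [mem_preimage, mem_ofPred_eq, Metric.mem_closedBall, EuclideanSpace.dist_eq,
      Real.sqrt_le_left hr, Real.dist_eq, sq_abs]
    rfl
  rw [← (EuclideanSpace.volume_preserving_symm_measurableEquiv_toLp ι).measure_preimage
    (measurableSet_le (by fun_prop) measurable_const).nullMeasurableSet, hpre,
    Measure.addHaar_closedBall _ _ hr, finrank_euclideanSpace]

lemma eq_of_add_mul_mem_Ico {L a : ℝ} {m n : ℤ} (hm : a + L * m ∈ Ico 0 L)
    (hn : a + L * n ∈ Ico 0 L) : m = n := by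
  obtain ⟨hm₀, hm₁⟩ := hm
  obtain ⟨hn₀, hn₁⟩ := hn
  have hL : 0 < L := by linarith
  have hlt : ((m - n : ℤ) : ℝ) < 1 := by
    push_cast
    by_contra! h
    nlinarith
  have hgt : ((n - m : ℤ) : ℝ) < 1 := by
    push_cast
    by_contra! h
    nlinarith
  have : m - n < 1 := by exact_mod_cast hlt
  have : n - m < 1 := by exact_mod_cast hgt
  omega

lemma exists_abs_sub_mul_eq_min {L a b : ℝ} (ha : a ∈ Ico 0 L) (hb : b ∈ Ico 0 L) :
    ∃ m ∈ Finset.Icc (-1 : ℤ) 1, |b - L * m - a| = min |a - b| (L - |a - b|) := by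
  obtain ⟨ha₀, ha₁⟩ := ha
  obtain ⟨hb₀, hb₁⟩ := hb
  by_cases hnear : |a - b| ≤ L - |a - b|
  · refine ⟨0, by decide, ?_⟩
    rw [min_eq_left hnear, abs_sub_comm a b]
    simp
  rw [min_eq_right (le_of_not_ge hnear)]
  rcases le_total a b with hab | hba
  · refine ⟨1, by decide, ?_⟩
    rw [abs_of_nonpos (by linarith : a - b ≤ 0), abs_of_nonpos (by push_cast; linarith)]
    push_cast
    ring
  · refine ⟨-1, by decide, ?_⟩
    rw [abs_of_nonneg (by linarith : 0 ≤ a - b), abs_of_nonneg (by push_cast; linarith)]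
    push_cast
    ring

open Function in
lemma pairwise_disjoint_preimage_add_box (d : ℕ) (L : ℝ) :
    Pairwise (Disjoint on (fun k : Fin d → ℤ => (· + fun i => L * k i) ⁻¹' box d L)) := by
  intro k k' hne
  refine Set.disjoint_left.mpr fun u hu hu' => hne (funext fun i => ?_)
  exact eq_of_add_mul_mem_Ico (hu i (mem_univ i)) (hu' i (mem_univ i))

lemma volume_torusBall_le {d : ℕ} {L r : ℝ} (hr : 0 ≤ r) {x : Fin d → ℝ} (hx : x ∈ box d L) :
    volume ({y | torusDist d L x y ≤ r} ∩ box d L)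
      ≤ ENNReal.ofReal (r ^ d) * volume (Metric.ball (0 : EuclideanSpace ℝ (Fin d)) 1) := by
  classical
  set Q : Set (Fin d → ℝ) := {z | ∑ i, (z i - x i) ^ 2 ≤ r ^ 2}
  set shift : (Fin d → ℤ) → Fin d → ℝ := fun k i => L * k i
  set C : (Fin d → ℤ) → Set (Fin d → ℝ) := fun k => Q ∩ (· + shift k) ⁻¹' box d L
  set K := Fintype.piFinset fun _ : Fin d => Finset.Icc (-1 : ℤ) 1
  have hcover : {y | torusDist d L x y ≤ r} ∩ box d L ⊆ ⋃ k ∈ K, (· - shift k) ⁻¹' C k := by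
    rintro y ⟨hdist, hy⟩
    choose k hkK hk using fun i => exists_abs_sub_mul_eq_min (hx i (mem_univ i)) (hy i (mem_univ i))
    refine mem_biUnion (Fintype.mem_piFinset.mpr hkK) ⟨?_, by simpa using hy⟩
    rw [mem_ofPred_eq, torusDist, Real.sqrt_le_left hr] at hdist
    simpa only [Q, mem_ofPred_eq, Pi.sub_apply, shift, ← hk, sq_abs] using hdist
  have hdisj : (K : Set (Fin d → ℤ)).PairwiseDisjoint C := fun k _ k' _ hne =>
    (pairwise_disjoint_preimage_add_box d L hne).mono inter_subset_right inter_subset_right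
  have hC : ∀ k, MeasurableSet (C k) := fun k =>
    (measurableSet_le (by fun_prop) measurable_const).inter
      ((MeasurableSet.univ_pi fun _ => measurableSet_Ico).preimage (measurable_add_const _))
  calc volume ({y | torusDist d L x y ≤ r} ∩ box d L)
      ≤ volume (⋃ k ∈ K, (· - shift k) ⁻¹' C k) := measure_mono hcover
    _ ≤ ∑ k ∈ K, volume ((· - shift k) ⁻¹' C k) := measure_biUnion_finset_le _ _
    _ = ∑ k ∈ K, volume (C k) := by simp only [sub_eq_add_neg, measure_preimage_add_right]
    _ = volume (⋃ k ∈ K, C k) := (measure_biUnion_finset hdisj fun k _ => hC k).symm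
    _ ≤ volume Q := measure_mono (iUnion₂_subset fun _ _ => inter_subset_left)
    _ = _ := by rw [volume_setOf_sum_sq_sub_le x hr, Fintype.card_fin]

section RandomSet

variable {X Ω : Type*} [MeasurableSpace X] [MeasurableSpace Ω] {ν : Measure X} {P : Measure Ω}
  {ψ : Ω → Set X}

lemma lintegral_measure_eq_lintegral_prob_mem [SFinite ν] [SFinite P]
    (hψ : MeasurableSet {p : X × Ω | p.1 ∈ ψ p.2}) :
    ∫⁻ ω, ν (ψ ω) ∂P = ∫⁻ x, P {ω | x ∈ ψ ω} ∂ν :=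
  (Measure.prod_apply_symm (μ := ν) (ν := P) hψ).symm.trans (Measure.prod_apply hψ)

lemma lintegral_measure_mul_self_eq [SFinite ν] [SFinite P]
    (hψ : MeasurableSet {p : X × Ω | p.1 ∈ ψ p.2}) :
    ∫⁻ ω, ν (ψ ω) * ν (ψ ω) ∂P = ∫⁻ x, ∫⁻ y, P {ω | x ∈ ψ ω ∧ y ∈ ψ ω} ∂ν ∂ν := by
  have hψψ : MeasurableSet {p : (X × X) × Ω | p.1 ∈ ψ p.2 ×ˢ ψ p.2} :=
    (hψ.preimage (measurable_fst.fst.prodMk measurable_snd)).inter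
      (hψ.preimage (measurable_fst.snd.prodMk measurable_snd))
  simp_rw [← Measure.prod_prod]
  rw [lintegral_measure_eq_lintegral_prob_mem hψψ]
  exact lintegral_prod _ (measurable_measure_prodMk_left hψψ).aemeasurable

lemma lintegral_measure_mul_self_le [SFinite ν] [SFinite P]
    (hψ : MeasurableSet {p : X × Ω | p.1 ∈ ψ p.2}) (N : X → Set X) {D : ℝ≥0∞}
    (hN : ∀ᵐ x ∂ν, ν (N x) ≤ D)
    (hindep : ∀ᵐ x ∂ν, ∀ᵐ y ∂ν, y ∉ N x →
      P {ω | x ∈ ψ ω ∧ y ∈ ψ ω} = P {ω | x ∈ ψ ω} * P {ω | y ∈ ψ ω}) :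
    ∫⁻ ω, ν (ψ ω) * ν (ψ ω) ∂P
      ≤ (∫⁻ ω, ν (ψ ω) ∂P) ^ 2 + D * ∫⁻ ω, ν (ψ ω) ∂P := by
  rw [lintegral_measure_mul_self_eq hψ, lintegral_measure_eq_lintegral_prob_mem hψ]
  set q : X → ℝ≥0∞ := fun x => P {ω | x ∈ ψ ω}
  set I := ∫⁻ x, q x ∂ν
  have hq : Measurable q := measurable_measure_prodMk_left hψ
  have hinner : ∀ᵐ x ∂ν, ∫⁻ y, P {ω | x ∈ ψ ω ∧ y ∈ ψ ω} ∂ν ≤ q x * I + D * q x := by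
    filter_upwards [hN, hindep] with x hNx hx
    have hpoint : ∀ᵐ y ∂ν,
        P {ω | x ∈ ψ ω ∧ y ∈ ψ ω} ≤ q x * q y + (N x).indicator (fun _ => q x) y := by
      filter_upwards [hx] with y hy
      by_cases hyN : y ∈ N x
      · rw [indicator_of_mem hyN]
        exact le_add_left (measure_mono fun ω hω => hω.1)
      · rw [hy hyN]
        exact le_self_add
    calc ∫⁻ y, P {ω | x ∈ ψ ω ∧ y ∈ ψ ω} ∂ν
        ≤ ∫⁻ y, q x * q y + (N x).indicator (fun _ => q x) y ∂ν := lintegral_mono_ae hpoint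
      _ ≤ q x * I + q x * ν (N x) := by
        rw [lintegral_add_left (hq.const_mul _), lintegral_const_mul _ hq]
        gcongr
        exact lintegral_indicator_const_le _ _
      _ ≤ q x * I + D * q x := by rw [mul_comm D]; gcongr
  calc ∫⁻ x, ∫⁻ y, P {ω | x ∈ ψ ω ∧ y ∈ ψ ω} ∂ν ∂ν
      ≤ ∫⁻ x, q x * I + D * q x ∂ν := lintegral_mono_ae hinner
    _ = I ^ 2 + D * I := by
      rw [lintegral_add_left (hq.mul_const _), lintegral_mul_const _ hq,
        lintegral_const_mul _ hq, sq]

lemma variance_toReal_measure_le [IsFiniteMeasure ν] [IsProbabilityMeasure P]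
    (hψ : MeasurableSet {p : X × Ω | p.1 ∈ ψ p.2}) (N : X → Set X) {D : ℝ≥0∞} (hD : D ≠ ⊤)
    (hN : ∀ᵐ x ∂ν, ν (N x) ≤ D)
    (hindep : ∀ᵐ x ∂ν, ∀ᵐ y ∂ν, y ∉ N x →
      P {ω | x ∈ ψ ω ∧ y ∈ ψ ω} = P {ω | x ∈ ψ ω} * P {ω | y ∈ ψ ω}) :
    variance (fun ω => (ν (ψ ω)).toReal) P ≤ D.toReal * ∫ ω, (ν (ψ ω)).toReal ∂P := by
  have hY : Measurable fun ω => ν (ψ ω) := measurable_measure_prodMk_right hψ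
  have hfin : ∀ᵐ ω ∂P, ν (ψ ω) < ⊤ := ae_of_all _ fun ω => measure_lt_top ν _
  have hL2 : MemLp (fun ω => (ν (ψ ω)).toReal) 2 P :=
    memLp_of_bounded (a := 0) (b := (ν univ).toReal)
      (ae_of_all _ fun ω => ⟨ENNReal.toReal_nonneg,
        ENNReal.toReal_mono (measure_ne_top ν _) (measure_mono (subset_univ _))⟩)
      hY.ennreal_toReal.aestronglyMeasurable 2
  have hmean : ∫ ω, (ν (ψ ω)).toReal ∂P = (∫⁻ ω, ν (ψ ω) ∂P).toReal :=
    integral_toReal hY.aemeasurable hfin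
  have hsecond : ∫ ω, (ν (ψ ω)).toReal ^ 2 ∂P = (∫⁻ ω, ν (ψ ω) * ν (ψ ω) ∂P).toReal := by
    simp_rw [sq, ← ENNReal.toReal_mul]
    exact integral_toReal (hY.mul hY).aemeasurable
      (hfin.mono fun ω h => ENNReal.mul_lt_top h h)
  have hI : ∫⁻ ω, ν (ψ ω) ∂P ≠ ⊤ :=
    (lintegral_mono fun ω => measure_mono (subset_univ (ψ ω))).trans_lt (by simp) |>.ne
  have hbound := ENNReal.toReal_mono (by finiteness)
    (lintegral_measure_mul_self_le hψ N hN hindep)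
  rw [ENNReal.toReal_add (by finiteness) (by finiteness), ENNReal.toReal_pow,
    ENNReal.toReal_mul] at hbound
  rw [variance_eq_sub hL2]
  simp only [Pi.pow_apply]
  rw [hsecond, hmean]
  linarith

end RandomSet

theorem variance_volume_bound_general {Ω : Type*} [MeasurableSpace Ω]
    (P : Measure Ω) [IsProbabilityMeasure P]
    (d : ℕ) (L α t : ℝ) (hα : 0 < α) (ht : 0 ≤ t)
    (ψ : Ω → Set (Fin d → ℝ))
    (hsub : ∀ ω, ψ ω ⊆ box d L)
    (hmeas : MeasurableSet {p : (Fin d → ℝ) × Ω | p.1 ∈ ψ p.2})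
    (hindep : ∀ x y, x ∈ box d L → y ∈ box d L → torusDist d L x y > 2 * α * t →
      (P {ω | x ∈ ψ ω ∧ y ∈ ψ ω}).toReal
        = (P {ω | x ∈ ψ ω}).toReal * (P {ω | y ∈ ψ ω}).toReal)
    (Y : Ω → ℝ) (hY : ∀ ω, Y ω = (volume (ψ ω)).toReal) :
    variance Y P ≤ unitBallVol d * (2 * α * t) ^ d * ∫ ω, Y ω ∂P := by
  set ν := volume.restrict (box d L)
  have hbox : MeasurableSet (box d L) := MeasurableSet.univ_pi fun _ => measurableSet_Ico
  have : IsFiniteMeasure ν := isFiniteMeasure_restrict.mpr <| by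
    rw [box, volume_pi_pi]
    exact (ENNReal.prod_lt_top fun _ _ => measure_Ico_lt_top).ne
  have hYν : Y = fun ω => (ν (ψ ω)).toReal :=
    funext fun ω => by rw [hY, Measure.restrict_eq_self _ (hsub ω)]
  have hc : 0 ≤ 2 * α * t := by positivity
  have hN : ∀ᵐ x ∂ν, ν {y | torusDist d L x y ≤ 2 * α * t} ≤
      ENNReal.ofReal ((2 * α * t) ^ d) *
        volume (Metric.ball (0 : EuclideanSpace ℝ (Fin d)) 1) := by
    filter_upwards [ae_restrict_mem hbox] with x hx
    rw [Measure.restrict_apply' hbox]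
    exact volume_torusBall_le hc hx
  have hindepν : ∀ᵐ x ∂ν, ∀ᵐ y ∂ν, y ∉ {y | torusDist d L x y ≤ 2 * α * t} →
      P {ω | x ∈ ψ ω ∧ y ∈ ψ ω} = P {ω | x ∈ ψ ω} * P {ω | y ∈ ψ ω} := by
    filter_upwards [ae_restrict_mem hbox] with x hx
    filter_upwards [ae_restrict_mem hbox] with y hy hfar
    rw [← ENNReal.toReal_eq_toReal_iff' (by finiteness) (by finiteness), ENNReal.toReal_mul]
    exact hindep x y hx hy (not_le.mp hfar)
  rw [hYν]
  refine (variance_toReal_measure_le hmeas _ (by finiteness) hN hindepν).trans_eq ?_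
  rw [ENNReal.toReal_mul, ENNReal.toReal_ofReal (by positivity), unitBallVol]
  ring

/-- Variance bound for the volume `Y_k(t)` of type-≥k sites: if sites at torus distance
greater than `2αt` are occupied independently, then
`Var(Y_k(t)) ≤ γ_d (2αt)^d E[Y_k(t)]`. -/
theorem variance_volume_bound {Ω : Type*} [MeasurableSpace Ω]
    (P : Measure Ω) [IsProbabilityMeasure P]
    (d : ℕ) (hd : 0 < d) (L α t : ℝ) (hL : 0 < L) (hα : 0 < α) (ht : 0 ≤ t)
    (ψ : Ω → Set (Fin d → ℝ))
    (hsub : ∀ ω, ψ ω ⊆ box d L)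
    (hmeas : MeasurableSet {p : (Fin d → ℝ) × Ω | p.1 ∈ ψ p.2})
    (hindep : ∀ x y, x ∈ box d L → y ∈ box d L → torusDist d L x y > 2 * α * t →
      (P {ω | x ∈ ψ ω ∧ y ∈ ψ ω}).toReal
        = (P {ω | x ∈ ψ ω}).toReal * (P {ω | y ∈ ψ ω}).toReal)
    (Y : Ω → ℝ) (hY : ∀ ω, Y ω = (volume (ψ ω)).toReal) :
    variance Y P ≤ unitBallVol d * (2 * α * t) ^ d * ∫ ω, Y ω ∂P :=
  variance_volume_bound_general P d L α t hα ht ψ hsub hmeas hindep Y hY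
end
end

section
/- Let τ_1 be exponential with rate c_1 and for 2 ≤ j ≤ k let τ_j be independent random variables with P(τ_j > u) = exp(−c_j γ_d u^{d+1}/(d+1)) for 0 < u < 1/2. Then for 0 < t < 1/2: P(τ_1 + ⋯ + τ_k ≤ t) ≥ J_k(t) γ_d^{k−1} c_1⋯c_k (d!)^{k−1} t^{(k−1)d+k}/((k−1)d+k)!, where J_k(t) = e^{−c_1 t} ∏_{j=2}^k exp(−c_j γ_d t^{d+1}/(d+1)). -/
open MeasureTheory ProbabilityTheory

noncomputable section

/-!
On `(0, t]` each summand has a CDF bounded below by a monomial `B v ^ m / m!`: since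
`1 - exp (-x) ≥ exp (-y) x` for `0 ≤ x ≤ y`, the tail `exp (-a v ^ (p + 1) / (p + 1))` gives
`m = p + 1` and `B = a p! exp (-a t ^ (p + 1) / (p + 1))`. For independent nonnegative summands
such bounds multiply while the exponents add: conditioning on one summand and applying the
layer-cake formula to the other reduces this to the Beta integral
`∫₀ˢ x ^ p (s - x) ^ q dx = p! q! s ^ (p + q + 1) / (p + q + 1)!`.
-/

open Set Real
open scoped Nat

theorem integral_pow_mul_sub_pow (p q : ℕ) (s : ℝ) :
    ∫ x in 0..s, x ^ p * (s - x) ^ q = p ! * q ! / (p + q + 1)! * s ^ (p + q + 1) := by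
  induction p generalizing q with
  | zero =>
    simp only [pow_zero, one_mul, zero_add, Nat.factorial_zero, Nat.cast_one]
    rw [intervalIntegral.integral_comp_sub_left (· ^ q) s]
    simp [integral_pow, Nat.factorial_succ]
    field_simp
  | succ p ih =>
    have hu : ∀ x ∈ uIcc 0 s, HasDerivAt (· ^ (p + 1)) ((p + 1 : ℝ) * x ^ p) x :=
      fun x _ ↦ by simpa using hasDerivAt_pow (p + 1) x
    have hv : ∀ x ∈ uIcc 0 s,
        HasDerivAt (fun y ↦ -(s - y) ^ (q + 1) / (q + 1 : ℝ)) ((s - x) ^ q) x := fun x _ ↦ by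
      refine (((hasDerivAt_id' x).const_sub s).pow (q + 1)).neg.div_const _
        |>.congr_deriv ?_
      push_cast
      field_simp
    rw [intervalIntegral.integral_mul_deriv_eq_deriv_mul hu hv
      (Continuous.intervalIntegrable (by fun_prop) _ _)
      (Continuous.intervalIntegrable (by fun_prop) _ _)]
    have : ∀ x : ℝ, (p + 1 : ℝ) * x ^ p * (-(s - x) ^ (q + 1) / (q + 1))
        = -((p + 1) / (q + 1)) * (x ^ p * (s - x) ^ (q + 1)) := fun x ↦ by ring
    simp_rw [this, intervalIntegral.integral_const_mul, ih]
    rw [show p + (q + 1) + 1 = p + 1 + q + 1 by ring]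
    simp only [Nat.factorial_succ]
    push_cast
    field_simp
    ring

theorem Real.exp_neg_mul_le_one_sub_exp_neg {x y : ℝ} (hx : 0 ≤ x) (hxy : x ≤ y) :
    exp (-y) * x ≤ 1 - exp (-x) := by
  have h1 : exp (-y) * x ≤ exp (-x) * x := by gcongr
  have h2 : exp (-x) * (x + 1) ≤ exp (-x) * exp x := by gcongr; exact add_one_le_exp x
  rw [← exp_add, neg_add_cancel, exp_zero] at h2
  linarith

theorem le_lintegral_max_sub_pow_of_le_cdf (ν : Measure ℝ) (n m : ℕ) {B s : ℝ} (hB : 0 ≤ B)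
    (hs : 0 ≤ s)
    (hν : ∀ v ∈ Ioo 0 s, ENNReal.ofReal (B * v ^ m / m !) ≤ ν (Iic v)) :
    ENNReal.ofReal (B * (n + 1)! / (n + m + 1)! * s ^ (n + m + 1))
      ≤ ∫⁻ u, ENNReal.ofReal (max (s - u) 0 ^ (n + 1)) ∂ν := by
  have hpow : ∀ x : ℝ, x ^ (n + 1) = ∫ t in 0..x, (n + 1 : ℝ) * t ^ n := fun x ↦ by
    rw [intervalIntegral.integral_const_mul, integral_pow]
    field_simp
    simp
  simp_rw [hpow]
  rw [lintegral_comp_eq_lintegral_meas_le_mul_of_measurable (f := fun u ↦ max (s - u) 0) ν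
    (fun u ↦ le_max_right _ _) (by fun_prop)
    (fun t _ ↦ Continuous.intervalIntegrable (by fun_prop) _ _) (by fun_prop)
    (fun t ht ↦ by positivity)]
  calc ENNReal.ofReal (B * (n + 1)! / (n + m + 1)! * s ^ (n + m + 1))
      = ∫⁻ t in Ioo 0 s, ENNReal.ofReal (B * (s - t) ^ m / m ! * ((n + 1) * t ^ n)) := by
        rw [← ofReal_integral_eq_lintegral_ofReal, ← integral_Ioc_eq_integral_Ioo,
          ← intervalIntegral.integral_of_le hs]
        · congr 1
          have : ∀ t : ℝ, B * (s - t) ^ m / m ! * ((n + 1) * t ^ n)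
              = B * (n + 1) / m ! * (t ^ n * (s - t) ^ m) := fun t ↦ by ring
          simp_rw [this, intervalIntegral.integral_const_mul, integral_pow_mul_sub_pow]
          simp only [Nat.factorial_succ]
          push_cast
          field_simp
        · exact (Continuous.integrableOn_Icc (by fun_prop)).mono_set Ioo_subset_Icc_self
        · filter_upwards [ae_restrict_mem measurableSet_Ioo] with t ht
          have := ht.2.le
          have := ht.1.le
          positivity
    _ ≤ ∫⁻ t in Ioo 0 s, ν (Iic (s - t)) * ENNReal.ofReal ((n + 1) * t ^ n) := by
        refine setLIntegral_mono' measurableSet_Ioo fun t ht ↦ ?_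
        rw [ENNReal.ofReal_mul (by have := ht.2.le; positivity)]
        gcongr
        exact hν _ ⟨by linarith [ht.2], by linarith [ht.1]⟩
    _ ≤ ∫⁻ t in Ioi 0, ν {u | t ≤ max (s - u) 0} * ENNReal.ofReal ((n + 1) * t ^ n) := by
        refine (lintegral_mono_set Ioo_subset_Ioi_self).trans
          (setLIntegral_mono' measurableSet_Ioi fun t ht ↦ ?_)
        gcongr
        intro u hu
        exact le_max_of_le_left (show t ≤ s - u by linarith [mem_Iic.mp hu])

namespace ProbabilityTheory

variable {Ω : Type*} [MeasurableSpace Ω] {P : Measure Ω}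

theorem IndepFun.measure_add_le_eq_lintegral {X Y : Ω → ℝ} (hX : Measurable X)
    (hY : Measurable Y) (hXY : IndepFun X Y P) [IsFiniteMeasure P] (s : ℝ) :
    P {ω | X ω + Y ω ≤ s} = ∫⁻ y, P {ω | X ω ≤ s - y} ∂(P.map Y) := by
  have hset : MeasurableSet {p : ℝ × ℝ | p.1 + p.2 ≤ s} :=
    measurableSet_le (by fun_prop) (by fun_prop)
  change P ((fun ω ↦ (X ω, Y ω)) ⁻¹' {p | p.1 + p.2 ≤ s}) = _
  rw [← Measure.map_apply (hX.prodMk hY) hset,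
    (indepFun_iff_map_prod_eq_prod_map_map hX.aemeasurable hY.aemeasurable).mp hXY,
    Measure.prod_apply_symm hset]
  refine lintegral_congr fun y ↦ ?_
  rw [Measure.map_apply hX (hset.preimage (by fun_prop))]
  congr 1
  ext ω
  simp [le_sub_iff_add_le]

def HasCdfLowerBound (P : Measure Ω) (X : Ω → ℝ) (B : ℝ) (m : ℕ) (s : ℝ) : Prop :=
  ∀ v ∈ Ioc 0 s, ENNReal.ofReal (B * v ^ m / m !) ≤ P {ω | X ω ≤ v}

theorem IndepFun.hasCdfLowerBound_add [IsFiniteMeasure P] {X Y : Ω → ℝ} (hX : Measurable X)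
    (hY : Measurable Y) (hXY : IndepFun X Y P) (hY0 : ∀ᵐ ω ∂P, 0 ≤ Y ω) {A B : ℝ}
    {m n : ℕ} {s : ℝ} (hm : 0 < m) (hB : 0 ≤ B) (hA : 0 ≤ A)
    (hXcdf : HasCdfLowerBound P X B m s)
    (hYcdf : HasCdfLowerBound P Y A n s) : HasCdfLowerBound P (X + Y) (B * A) (m + n) s := by
  obtain ⟨m, rfl⟩ : ∃ m', m = m' + 1 := ⟨m - 1, by omega⟩
  intro v hv
  simp only [Pi.add_apply]
  rw [hXY.measure_add_le_eq_lintegral hX hY]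
  calc ENNReal.ofReal (B * A * v ^ (m + 1 + n) / (m + 1 + n)!)
      = ENNReal.ofReal (B / (m + 1)!)
          * ENNReal.ofReal (A * (m + 1)! / (m + n + 1)! * v ^ (m + n + 1)) := by
        rw [← ENNReal.ofReal_mul (by positivity), show m + 1 + n = m + n + 1 by ring]
        congr 1
        field_simp
    _ ≤ ENNReal.ofReal (B / (m + 1)!)
          * ∫⁻ y, ENNReal.ofReal (max (v - y) 0 ^ (m + 1)) ∂(P.map Y) := by
        gcongr
        refine le_lintegral_max_sub_pow_of_le_cdf _ m n hA hv.1.le fun w hw ↦ ?_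
        rw [Measure.map_apply hY measurableSet_Iic]
        exact hYcdf w ⟨hw.1, hw.2.le.trans hv.2⟩
    _ = ∫⁻ y, ENNReal.ofReal (B * max (v - y) 0 ^ (m + 1) / (m + 1)!) ∂(P.map Y) := by
        rw [← lintegral_const_mul' _ _ ENNReal.ofReal_ne_top]
        congr 1 with y
        rw [← ENNReal.ofReal_mul (by positivity)]
        ring_nf
    _ ≤ ∫⁻ y, P {ω | X ω ≤ v - y} ∂(P.map Y) := by
        refine lintegral_mono_ae ?_
        filter_upwards [(ae_map_iff hY.aemeasurable measurableSet_Ici).2 hY0] with y hy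
        rcases lt_or_ge y v with hyv | hyv
        · rw [max_eq_left (by linarith)]
          exact hXcdf _ ⟨by linarith, by linarith [hv.2]⟩
        · simp [max_eq_right (sub_nonpos.mpr hyv)]

theorem iIndepFun.hasCdfLowerBound_sum [IsProbabilityMeasure P] {ι : Type*} {X : ι → Ω → ℝ}
    (hX : ∀ i, Measurable (X i)) (hind : iIndepFun X P) {I : Finset ι} {B : ι → ℝ}
    {m : ι → ℕ} {s : ℝ} (hX0 : ∀ i ∈ I, ∀ᵐ ω ∂P, 0 ≤ X i ω)
    (hm : ∀ i ∈ I, 0 < m i)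
    (hB : ∀ i ∈ I, 0 ≤ B i) (hcdf : ∀ i ∈ I, HasCdfLowerBound P (X i) (B i) (m i) s) :
    HasCdfLowerBound P (∑ i ∈ I, X i) (∏ i ∈ I, B i) (∑ i ∈ I, m i) s := by
  induction I using Finset.cons_induction with
  | empty =>
    intro v hv
    simp [hv.1.le]
  | cons j I hj ih =>
    simp only [Finset.forall_mem_cons] at hX0 hm hB hcdf
    have hsum0 : ∀ᵐ ω ∂P, 0 ≤ (∑ i ∈ I, X i) ω := by
      filter_upwards [(Filter.eventually_all_finset I).2 hX0.2] with ω hω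
      simpa [Finset.sum_apply] using Finset.sum_nonneg hω
    rw [Finset.sum_cons, Finset.prod_cons, Finset.sum_cons]
    exact (hind.indepFun_finsetSum_of_notMem hX hj).symm.hasCdfLowerBound_add (hX j)
      (by fun_prop) hsum0 hm.1 hB.1
      (Finset.prod_nonneg hB.2) hcdf.1 (ih hX0.2 hm.2 hB.2 hcdf.2)

theorem hasCdfLowerBound_of_tail [IsProbabilityMeasure P] {X : Ω → ℝ} (hX : Measurable X)
    (p : ℕ) {a s : ℝ} (ha : 0 ≤ a)
    (htail : ∀ v ∈ Ioc 0 s, (P {ω | v < X ω}).toReal = exp (-(a * v ^ (p + 1) / (p + 1)))) :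
    HasCdfLowerBound P X (a * p ! * exp (-(a * s ^ (p + 1) / (p + 1)))) (p + 1) s := by
  intro v hv
  have hcompl : {ω | X ω ≤ v} = {ω | v < X ω}ᶜ := by ext; simp
  rw [hcompl, prob_compl_eq_one_sub (s := {ω | v < X ω}) (hX measurableSet_Ioi),
    ← ENNReal.ofReal_toReal (measure_ne_top P _), htail v hv, ← ENNReal.ofReal_one,
    ← ENNReal.ofReal_sub _ (exp_pos _).le]
  refine ENNReal.ofReal_le_ofReal ?_
  calc a * p ! * exp (-(a * s ^ (p + 1) / (p + 1))) * v ^ (p + 1) / (p + 1)!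
      = exp (-(a * s ^ (p + 1) / (p + 1))) * (a * v ^ (p + 1) / (p + 1)) := by
        rw [Nat.factorial_succ]
        push_cast
        field_simp
    _ ≤ 1 - exp (-(a * v ^ (p + 1) / (p + 1))) := by
        have := hv.1.le
        exact exp_neg_mul_le_one_sub_exp_neg (by positivity) (by gcongr; exact hv.2)

end ProbabilityTheory

theorem sum_mutation_waiting_times_lower_bound_general
    (d k : ℕ) (hk : 1 ≤ k) (c : ℕ → ℝ) (hc : ∀ j, 0 < c j)
    {Ω : Type*} [MeasurableSpace Ω] (P : Measure Ω) [IsProbabilityMeasure P]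
    (τ : ℕ → Ω → ℝ)
    (hmeas : ∀ j, Measurable (τ j))
    (hnonneg : ∀ j ω, 0 ≤ τ j ω)
    (hindep : iIndepFun (m := fun _ => Real.measurableSpace) τ P)
    (hτ1 : ∀ u : ℝ, 0 ≤ u → (P {ω | τ 1 ω > u}).toReal = Real.exp (-(c 1) * u))
    (hτj : ∀ j ∈ Finset.Icc 2 k, ∀ u ∈ Set.Ioo (0:ℝ) (1/2),
      (P {ω | τ j ω > u}).toReal
        = Real.exp (-(c j) * unitBallVol d * u ^ (d + 1) / (d + 1)))
    (t : ℝ) (ht0 : 0 < t) (ht : t < 1/2) :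
    (P {ω | ∑ j ∈ Finset.Icc 1 k, τ j ω ≤ t}).toReal
      ≥ (Real.exp (-(c 1) * t)
            * ∏ j ∈ Finset.Icc 2 k, Real.exp (-(c j) * unitBallVol d * t ^ (d + 1) / (d + 1)))
          * unitBallVol d ^ (k - 1) * (∏ j ∈ Finset.Icc 1 k, c j)
          * (Nat.factorial d : ℝ) ^ (k - 1) * t ^ ((k - 1) * d + k)
          / (Nat.factorial ((k - 1) * d + k)) := by
  set γ := unitBallVol d
  have hγ : 0 ≤ γ := ENNReal.toReal_nonneg
  have hB : ∀ j, 0 ≤ c j * γ * d ! * exp (-(c j * γ * t ^ (d + 1) / (d + 1))) := fun j ↦ by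
    have := hc j
    positivity
  have hcdf₁ : HasCdfLowerBound P (τ 1) (c 1 * exp (-c 1 * t)) 1 t := by
    simpa using hasCdfLowerBound_of_tail (hmeas 1) 0 (hc 1).le (s := t) fun v hv ↦ by
      simpa using hτ1 v hv.1.le
  have hcdf₂ : HasCdfLowerBound P (∑ j ∈ Finset.Icc 2 k, τ j)
      (∏ j ∈ Finset.Icc 2 k, c j * γ * d ! * exp (-(c j * γ * t ^ (d + 1) / (d + 1))))
      (∑ j ∈ Finset.Icc 2 k, (d + 1)) t :=
    hindep.hasCdfLowerBound_sum hmeas (fun j _ ↦ ae_of_all _ (hnonneg j)) (fun _ _ ↦ d.succ_pos)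
      (fun j _ ↦ hB j) fun j hj ↦
        hasCdfLowerBound_of_tail (hmeas j) d (mul_nonneg (hc j).le hγ) fun v hv ↦ by
          rw [hτj j hj v ⟨hv.1, hv.2.trans_lt ht⟩]
          ring_nf
  have hsum := (hindep.indepFun_finsetSum_of_notMem hmeas (by simp : 1 ∉ Finset.Icc 2 k)).symm
    |>.hasCdfLowerBound_add (hmeas 1) (by fun_prop)
      (ae_of_all _ fun ω ↦ by simpa using Finset.sum_nonneg fun j _ ↦ hnonneg j ω) one_pos
      (by have := hc 1; positivity) (Finset.prod_nonneg fun j _ ↦ hB j) hcdf₁ hcdf₂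
      t ⟨ht0, le_rfl⟩
  have hIcc : Finset.Icc 1 k = insert 1 (Finset.Icc 2 k) :=
    (Finset.insert_Icc_add_one_left_eq_Icc hk).symm
  have hexp : 1 + ∑ j ∈ Finset.Icc 2 k, (d + 1) = (k - 1) * d + k := by
    obtain ⟨r, rfl⟩ : ∃ r, k = r + 1 := ⟨k - 1, by omega⟩
    simp only [Finset.sum_const, Nat.card_Icc, smul_eq_mul, Nat.add_sub_cancel,
      show r + 1 + 1 - 2 = r by omega]
    ring
  have hconst : c 1 * exp (-c 1 * t)
        * ∏ j ∈ Finset.Icc 2 k, c j * γ * d ! * exp (-(c j * γ * t ^ (d + 1) / (d + 1)))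
      = (exp (-c 1 * t) * ∏ j ∈ Finset.Icc 2 k, exp (-c j * γ * t ^ (d + 1) / (d + 1)))
          * γ ^ (k - 1) * (∏ j ∈ Finset.Icc 1 k, c j) * (d ! : ℝ) ^ (k - 1) := by
    simp only [hIcc, Finset.prod_insert (by simp : 1 ∉ Finset.Icc 2 k), Finset.prod_mul_distrib,
      Finset.prod_const, Nat.card_Icc, neg_mul, neg_div, show k + 1 - 2 = k - 1 by omega]
    ring
  rw [hexp, hconst] at hsum
  rw [ge_iff_le, ← ENNReal.ofReal_le_iff_le_toReal (measure_ne_top _ _)]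
  convert hsum using 2
  simp [hIcc, Finset.sum_insert]

/-- Lower bound for `P(τ_1 + ⋯ + τ_k ≤ t)` for `0 < t < 1/2`, where `τ_1` is exponential
with rate `c_1` and `τ_j` (for `2 ≤ j ≤ k`) has tail `exp(-c_j γ_d u^{d+1}/(d+1))` on
`(0, 1/2)`, the `τ_j` being independent. -/
theorem sum_mutation_waiting_times_lower_bound
    (d k : ℕ) (hd : 0 < d) (hk : 1 ≤ k) (c : ℕ → ℝ) (hc : ∀ j, 0 < c j)
    {Ω : Type*} [MeasurableSpace Ω] (P : Measure Ω) [IsProbabilityMeasure P]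
    (τ : ℕ → Ω → ℝ)
    (hmeas : ∀ j, Measurable (τ j))
    (hnonneg : ∀ j ω, 0 ≤ τ j ω)
    (hindep : iIndepFun (m := fun _ => Real.measurableSpace) τ P)
    (hτ1 : ∀ u : ℝ, 0 ≤ u → (P {ω | τ 1 ω > u}).toReal = Real.exp (-(c 1) * u))
    (hτj : ∀ j ∈ Finset.Icc 2 k, ∀ u ∈ Set.Ioo (0:ℝ) (1/2),
      (P {ω | τ j ω > u}).toReal
        = Real.exp (-(c j) * unitBallVol d * u ^ (d + 1) / (d + 1)))
    (t : ℝ) (ht0 : 0 < t) (ht : t < 1/2) :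
    (P {ω | ∑ j ∈ Finset.Icc 1 k, τ j ω ≤ t}).toReal
      ≥ (Real.exp (-(c 1) * t)
            * ∏ j ∈ Finset.Icc 2 k, Real.exp (-(c j) * unitBallVol d * t ^ (d + 1) / (d + 1)))
          * unitBallVol d ^ (k - 1) * (∏ j ∈ Finset.Icc 1 k, c j)
          * (Nat.factorial d : ℝ) ^ (k - 1) * t ^ ((k - 1) * d + k)
          / (Nat.factorial ((k - 1) * d + k)) :=
  sum_mutation_waiting_times_lower_bound_general d k hk c hc P τ hmeas hnonneg hindep hτ1 hτj t ht0
    ht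

end
end
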